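/- arXiv:2404.09745 — 5 statements merged into one kernel-verified Lean document; each statement's English description precedes it below -/
import Mathlib

section
/- Let (X, m) be a probability space and let f_i, F ∈ L²(X, m) (i ∈ ℕ) be such that f_i → F weakly in L²(X, m). Then there exists a subsequence (f_{i_j}) such that the Cesàro averages along squares converge almost everywhere: (1/ℓ²) Σ_{j=1}^{ℓ²} f_{i_j}(x) → F(x) for m-almost every x ∈ X as ℓ → ∞. -/
open MeasureTheory Filter Topology
open scoped InnerProductSpace

/-!
Subtracting `F`, the sequence `v i = f i - F` tends weakly to `0` in `L²`, hence is bounded by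
Banach–Steinhaus. Passing to a subsequence along which each term is almost orthogonal to all earlier
ones, the partial sums satisfy `‖v 0 + ⋯ + v (n - 1)‖² = O(n)` (Banach–Saks). Along squares the
Cesàro averages then have `L²`-norms `O(1/ℓ)`, so their squares have summable integrals, which
forces almost everywhere convergence to `0`.
-/

theorem Filter.extraction_forall_lt_of_eventually {R : ℕ → ℕ → ℕ → Prop}
    (h : ∀ k a, ∀ᶠ b in atTop, R k a b) :
    ∃ φ : ℕ → ℕ, StrictMono φ ∧ ∀ j k, j < k → R k (φ j) (φ k) := by
  have hnext : ∀ k N, ∃ b, N < b ∧ ∀ a ≤ N, R k a b := fun k N =>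
    ((eventually_gt_atTop N).and ((Set.finite_le_nat N).eventually_all.2 fun a _ => h k a)).exists
  choose ψ hψ_gt hψ using hnext
  let φ : ℕ → ℕ := fun n => Nat.rec 0 (fun k p => ψ (k + 1) p) n
  have hφ : StrictMono φ := strictMono_nat_of_lt_succ fun k => hψ_gt (k + 1) (φ k)
  refine ⟨φ, hφ, fun j k hjk => ?_⟩
  obtain ⟨k, rfl⟩ := Nat.exists_eq_add_of_lt hjk
  exact hψ (j + k + 1) _ _ (hφ.monotone (by omega))

section InnerProductSpace

variable {H : Type*} [NormedAddCommGroup H] [InnerProductSpace ℝ H]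

theorem exists_norm_le_of_tendsto_inner_zero [CompleteSpace H] {v : ℕ → H}
    (hv : ∀ w, Tendsto (fun i => ⟪v i, w⟫_ℝ) atTop (𝓝 0)) : ∃ C, ∀ i, ‖v i‖ ≤ C := by
  obtain ⟨C, hC⟩ := banach_steinhaus (g := fun i => innerSL ℝ (v i)) fun w => by
    obtain ⟨B, hB⟩ := (hv w).norm.bddAbove_range
    exact ⟨B, fun i => hB ⟨i, rfl⟩⟩
  exact ⟨C, fun i => innerSL_apply_norm ℝ (v i) ▸ hC i⟩

theorem exists_strictMono_inner_sum_range_le_one {v : ℕ → H}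
    (hv : ∀ w, Tendsto (fun i => ⟪v i, w⟫_ℝ) atTop (𝓝 0)) :
    ∃ φ : ℕ → ℕ, StrictMono φ ∧
      ∀ k, ⟪∑ j ∈ Finset.range k, v (φ j), v (φ k)⟫_ℝ ≤ 1 := by
  have hsmall : ∀ (k : ℕ) a, ∀ᶠ b in atTop, ⟪v a, v b⟫_ℝ ≤ 1 / (k + 1) := fun k a =>
    ((hv (v a)).eventually_le_const (show (0 : ℝ) < 1 / (k + 1) by positivity)).mono
      fun b hb => by rwa [real_inner_comm]
  obtain ⟨φ, hφ, hR⟩ := Filter.extraction_forall_lt_of_eventually hsmall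
  refine ⟨φ, hφ, fun k => ?_⟩
  calc ⟪∑ j ∈ Finset.range k, v (φ j), v (φ k)⟫_ℝ
      = ∑ j ∈ Finset.range k, ⟪v (φ j), v (φ k)⟫_ℝ := sum_inner _ _ _
    _ ≤ ∑ _j ∈ Finset.range k, (1 : ℝ) / (k + 1) :=
        Finset.sum_le_sum fun j hj => hR j k (Finset.mem_range.1 hj)
    _ ≤ 1 := by
        rw [Finset.sum_const, Finset.card_range, nsmul_eq_mul, mul_one_div]
        exact div_le_one_of_le₀ (by linarith) (by positivity)

theorem norm_sum_range_sq_le {u : ℕ → H} {C : ℝ} (hC : ∀ k, ‖u k‖ ≤ C)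
    (h : ∀ k, ⟪∑ j ∈ Finset.range k, u j, u k⟫_ℝ ≤ 1) (n : ℕ) :
    ‖∑ j ∈ Finset.range n, u j‖ ^ 2 ≤ (C ^ 2 + 2) * n := by
  induction n with
  | zero => simp
  | succ n ih =>
    have hun : ‖u n‖ ^ 2 ≤ C ^ 2 := pow_le_pow_left₀ (norm_nonneg _) (hC n) 2
    rw [Finset.sum_range_succ, norm_add_sq_real]
    push_cast
    linarith [h n]

theorem exists_strictMono_norm_sum_range_sq_le [CompleteSpace H] {v : ℕ → H}
    (hv : ∀ w, Tendsto (fun i => ⟪v i, w⟫_ℝ) atTop (𝓝 0)) :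
    ∃ φ : ℕ → ℕ, StrictMono φ ∧ ∃ K, ∀ n, ‖∑ j ∈ Finset.range n, v (φ j)‖ ^ 2 ≤ K * n := by
  obtain ⟨C, hC⟩ := exists_norm_le_of_tendsto_inner_zero hv
  obtain ⟨φ, hφ, horth⟩ := exists_strictMono_inner_sum_range_le_one hv
  exact ⟨φ, hφ, C ^ 2 + 2, norm_sum_range_sq_le (fun k => hC (φ k)) horth⟩

end InnerProductSpace

theorem summable_norm_sq_inv_sq_smul_sum_range_sq {E : Type*} [SeminormedAddCommGroup E]
    [NormedSpace ℝ E] {u : ℕ → E} {K : ℝ}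
    (hK : ∀ n, ‖∑ j ∈ Finset.range n, u j‖ ^ 2 ≤ K * n) :
    Summable fun ℓ : ℕ => ‖((ℓ : ℝ) ^ 2)⁻¹ • ∑ j ∈ Finset.range (ℓ ^ 2), u j‖ ^ 2 := by
  refine Summable.of_nonneg_of_le (fun _ => by positivity) (fun ℓ => ?_)
    ((Real.summable_one_div_nat_pow.2 one_lt_two).mul_left K)
  rcases Nat.eq_zero_or_pos ℓ with rfl | hℓ
  · simp
  have hℓ2 : (0 : ℝ) < (ℓ : ℝ) ^ 2 := by positivity
  calc ‖((ℓ : ℝ) ^ 2)⁻¹ • ∑ j ∈ Finset.range (ℓ ^ 2), u j‖ ^ 2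
      = ‖∑ j ∈ Finset.range (ℓ ^ 2), u j‖ ^ 2 / ((ℓ : ℝ) ^ 2) ^ 2 := by
        rw [norm_smul, mul_pow, norm_inv, Real.norm_of_nonneg hℓ2.le, inv_pow, inv_mul_eq_div]
    _ ≤ K * (ℓ : ℝ) ^ 2 / ((ℓ : ℝ) ^ 2) ^ 2 := by
        gcongr
        exact_mod_cast hK (ℓ ^ 2)
    _ = K * (1 / (ℓ : ℝ) ^ 2) := by field_simp

namespace MeasureTheory

variable {X : Type*} [MeasurableSpace X] {m : Measure X}

theorem ae_tendsto_zero_of_summable_integral {g : ℕ → X → ℝ} (hg : ∀ ℓ, 0 ≤ᵐ[m] g ℓ)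
    (hg_int : ∀ ℓ, Integrable (g ℓ) m) (hs : Summable fun ℓ => ∫ x, g ℓ x ∂m) :
    ∀ᵐ x ∂m, Tendsto (fun ℓ => g ℓ x) atTop (𝓝 0) := by
  have heLp : ∀ ℓ, eLpNorm (g ℓ) 1 m = ENNReal.ofReal (∫ x, g ℓ x ∂m) := fun ℓ => by
    rw [eLpNorm_one_eq_lintegral_enorm, ofReal_integral_eq_lintegral_ofReal (hg_int ℓ) (hg ℓ)]
    refine lintegral_congr_ae ((hg ℓ).mono fun x hx => ?_)
    exact Real.enorm_of_nonneg hx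
  have htsum : ∑' ℓ, eLpNorm (g ℓ) 1 m ≠ ⊤ := by
    simp_rw [heLp, ← ENNReal.ofReal_tsum_of_nonneg (fun ℓ => integral_nonneg_of_ae (hg ℓ)) hs]
    exact ENNReal.ofReal_ne_top
  filter_upwards [summable_norm_of_tsum_eLpNorm_ne_top le_rfl
    (fun ℓ => (hg_int ℓ).aestronglyMeasurable) htsum] with x hx
  exact tendsto_zero_iff_norm_tendsto_zero.2 hx.tendsto_atTop_zero

theorem Lp.integral_sq_eq_norm_sq (g : Lp ℝ 2 m) : ∫ x, g x ^ 2 ∂m = ‖g‖ ^ 2 := by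
  rw [← real_inner_self_eq_norm_sq, L2.inner_def]
  simp [sq]

theorem Lp.ae_tendsto_zero_of_summable_norm_sq {g : ℕ → Lp ℝ 2 m}
    (hs : Summable fun ℓ => ‖g ℓ‖ ^ 2) : ∀ᵐ x ∂m, Tendsto (fun ℓ => g ℓ x) atTop (𝓝 0) := by
  have hsq := ae_tendsto_zero_of_summable_integral (g := fun ℓ x => g ℓ x ^ 2)
    (fun ℓ => ae_of_all _ fun x => sq_nonneg _) (fun ℓ => (Lp.memLp (g ℓ)).integrable_sq)
    (by simpa only [Lp.integral_sq_eq_norm_sq] using hs)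
  filter_upwards [hsq] with x hx
  rw [tendsto_zero_iff_abs_tendsto_zero]
  simpa [Function.comp_def, Real.sqrt_sq_eq_abs] using hx.sqrt

theorem MemLp.inner_toLp_eq_integral_mul {f : X → ℝ} (hf : MemLp f 2 m) (w : Lp ℝ 2 m) :
    ⟪hf.toLp f, w⟫_ℝ = ∫ x, f x * w x ∂m := by
  rw [L2.inner_def]
  refine integral_congr_ae (hf.coeFn_toLp.mono fun x hx => ?_)
  simp [hx, mul_comm]

end MeasureTheory

theorem stmt_1_general
    {X : Type*} [MeasurableSpace X] (m : Measure X)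
    (f : ℕ → X → ℝ) (F : X → ℝ)
    (hf : ∀ i, MemLp (f i) 2 m) (hF : MemLp F 2 m)
    (hweak : ∀ g : X → ℝ, MemLp g 2 m →
      Tendsto (fun i => ∫ x, f i x * g x ∂m) atTop (nhds (∫ x, F x * g x ∂m))) :
    ∃ i : ℕ → ℕ, StrictMono i ∧
      ∀ᵐ x ∂m, Tendsto
        (fun ℓ : ℕ => (1 / (ℓ : ℝ) ^ 2) * ∑ j ∈ Finset.range (ℓ ^ 2), f (i j) x)
        atTop (nhds (F x)) := by
  set v : ℕ → Lp ℝ 2 m := fun i => (hf i).toLp (f i) - hF.toLp F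
  have hv : ∀ w, Tendsto (fun i => ⟪v i, w⟫_ℝ) atTop (𝓝 0) := fun w => by
    simpa [v, inner_sub_left, MemLp.inner_toLp_eq_integral_mul] using
      (hweak w (Lp.memLp w)).sub_const (∫ x, F x * w x ∂m)
  obtain ⟨φ, hφ, K, hK⟩ := exists_strictMono_norm_sum_range_sq_le hv
  refine ⟨φ, hφ, ?_⟩
  have hv_coe : ∀ᵐ x ∂m, ∀ j, v j x = f j x - F x := ae_all_iff.2 fun j => by
    filter_upwards [Lp.coeFn_sub ((hf j).toLp (f j)) (hF.toLp F), (hf j).coeFn_toLp,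
      hF.coeFn_toLp] with x hsub hfj hF'
    rw [hsub, Pi.sub_apply, hfj, hF']
  have hsum_coe : ∀ᵐ x ∂m, ∀ ℓ : ℕ,
      (((ℓ : ℝ) ^ 2)⁻¹ • ∑ j ∈ Finset.range (ℓ ^ 2), v (φ j) : Lp ℝ 2 m) x
        = ((ℓ : ℝ) ^ 2)⁻¹ * ∑ j ∈ Finset.range (ℓ ^ 2), v (φ j) x := ae_all_iff.2 fun ℓ => by
    filter_upwards [Lp.coeFn_smul ((ℓ : ℝ) ^ 2)⁻¹ (∑ j ∈ Finset.range (ℓ ^ 2), v (φ j)),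
      Lp.coeFn_fun_finsetSum (Finset.range (ℓ ^ 2)) fun j => v (φ j)] with x hsmul hsum
    rw [hsmul, Pi.smul_apply, hsum, smul_eq_mul]
  filter_upwards [Lp.ae_tendsto_zero_of_summable_norm_sq
    (summable_norm_sq_inv_sq_smul_sum_range_sq hK), hv_coe, hsum_coe] with x hx hvx hsumx
  refine (zero_add (F x) ▸ hx.add_const (F x)).congr' ?_
  filter_upwards [eventually_ge_atTop 1] with ℓ hℓ
  simp only [hsumx, hvx, Finset.sum_sub_distrib, Finset.sum_const, Finset.card_range,
    nsmul_eq_mul]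
  have hℓ0 : (ℓ : ℝ) ≠ 0 := by positivity
  field_simp
  push_cast
  ring

/-- If `f_i → F` weakly in `L²(X, m)`, then there is a subsequence whose Cesàro averages
along squares converge to `F` almost everywhere. -/
theorem stmt_1
    {X : Type*} [MeasurableSpace X] (m : Measure X) [IsProbabilityMeasure m]
    (f : ℕ → X → ℝ) (F : X → ℝ)
    (hf : ∀ i, MemLp (f i) 2 m) (hF : MemLp F 2 m)
    (hweak : ∀ g : X → ℝ, MemLp g 2 m →
      Tendsto (fun i => ∫ x, f i x * g x ∂m) atTop (nhds (∫ x, F x * g x ∂m))) :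
    ∃ i : ℕ → ℕ, StrictMono i ∧
      ∀ᵐ x ∂m, Tendsto
        (fun ℓ : ℕ => (1 / (ℓ : ℝ) ^ 2) * ∑ j ∈ Finset.range (ℓ ^ 2), f (i j) x)
        atTop (nhds (F x)) :=
  stmt_1_general m f F hf hF hweak
end

section
/- Let (X, d) be a metric space, x ∈ X, and let σ₁, σ₂ be geodesic lines in X. Then for i = 1, 2 the limit b_i := lim_{t→∞} (d(x, σ_i(t)) − t) exists (the function t ↦ d(x, σ_i(t)) − t is nonincreasing on [0, ∞) and bounded below by −d(x, σ_i(0))), and the following identity holds: limsup_{t→∞} exp(d(σ₁(t), σ₂(t)) − 2t) = e^{b₁ + b₂} · limsup_{t→∞} exp(−2 (σ₁(t) | σ₂(t))_x). In particular, d⁺(σ₁, σ₂) := limsup_{t→∞} exp(d(σ₁(t), σ₂(t)) − 2t) is finite, bounded above by e^{b₁ + b₂}. -/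
/-!
Along a geodesic line `σ`, the triangle inequality makes `t ↦ d(x, σ t) - t` nonincreasing and
bounded below by `-d(x, σ 0)`, so it converges to some `b`. Unfolding the Gromov product,
`d(σ₁ t, σ₂ t) - 2t = (d(x, σ₁ t) - t) + (d(x, σ₂ t) - t) - 2 (σ₁ t | σ₂ t)_x`, so after
exponentiating the first factor tends to `e^{b₁ + b₂}` and the limsup of the product
splits. The second factor is at most `1` because Gromov products are nonnegative.
-/

open Filter Topology

/-- The Gromov product of `p, q` with respect to `x`. -/
noncomputable def gromovProd {X : Type*} [MetricSpace X] (x p q : X) : ℝ :=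
  (dist x p + dist x q - dist p q) / 2

section GromovProd

variable {X : Type*} [MetricSpace X]

lemma gromovProd_nonneg (x p q : X) : 0 ≤ gromovProd x p q := by
  have := dist_triangle_left p q x
  unfold gromovProd
  linarith

lemma dist_eq_add_sub_two_mul_gromovProd (x p q : X) :
    dist p q = dist x p + dist x q - 2 * gromovProd x p q := by
  unfold gromovProd
  ring

lemma exp_neg_two_mul_gromovProd_le_one (x p q : X) :
    Real.exp (-2 * gromovProd x p q) ≤ 1 :=
  Real.exp_le_one_iff.2 (by linarith [gromovProd_nonneg x p q])

end GromovProd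

section GeodesicLine

variable {X : Type*} [PseudoMetricSpace X] {σ : ℝ → X}

lemma LipschitzWith.antitone_dist_sub (hσ : LipschitzWith 1 σ) (x : X) :
    Antitone fun t => dist x (σ t) - t := by
  intro s t hst
  have hstep : dist (σ s) (σ t) ≤ t - s := by
    simpa [Real.dist_eq, abs_of_nonpos (sub_nonpos.2 hst)] using hσ.dist_le_mul s t
  linarith [dist_triangle x (σ s) (σ t)]

lemma Isometry.neg_dist_le_dist_sub (hσ : Isometry σ) (x : X) (t : ℝ) :
    -dist x (σ 0) ≤ dist x (σ t) - t := by
  have hdist : t ≤ dist (σ 0) (σ t) := by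
    rw [hσ.dist_eq, Real.dist_eq, zero_sub, abs_neg]
    exact le_abs_self t
  linarith [dist_triangle_left (σ 0) (σ t) x]

lemma Isometry.exists_tendsto_dist_sub (hσ : Isometry σ) (x : X) :
    ∃ b : ℝ, Tendsto (fun t => dist x (σ t) - t) atTop (𝓝 b) :=
  ⟨_, tendsto_atTop_ciInf (hσ.lipschitz.antitone_dist_sub x)
    ⟨_, Set.forall_mem_range.2 (hσ.neg_dist_le_dist_sub x)⟩⟩

end GeodesicLine

lemma Filter.Tendsto.limsup_mul_of_nonneg {ι : Type*} {f : Filter ι} [f.NeBot] {u v : ι → ℝ}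
    {c : ℝ} (hu : Tendsto u f (𝓝 c)) (hu₀ : 0 ≤ᶠ[f] u) (hv₀ : 0 ≤ᶠ[f] v)
    (hv : IsBoundedUnder (· ≤ ·) f v) :
    limsup (u * v) f = c * limsup v f := by
  apply le_antisymm
  · simpa only [hu.limsup_eq] using
      limsup_mul_le hu₀.frequently hu.isBoundedUnder_le hv₀ hv
  · simpa only [hu.liminf_eq, mul_comm v u, mul_comm c] using
      le_limsup_mul hv₀.frequently hv hu₀ hu.isBoundedUnder_le

/-- For geodesic lines `σ₁, σ₂` in a metric space and a basepoint `x`, the Busemann-type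
limits `b_i = lim_{t→∞} (d(x, σ_i(t)) - t)` exist (the functions are nonincreasing on
`[0,∞)` and bounded below by `-d(x, σ_i(0))`), and
`limsup exp(d(σ₁(t),σ₂(t)) - 2t) = e^{b₁+b₂} · limsup exp(-2(σ₁(t)|σ₂(t))_x)`;
in particular this quantity is at most `e^{b₁+b₂}`. -/
theorem stmt_4 {X : Type*} [MetricSpace X] (x : X) (σ₁ σ₂ : ℝ → X)
    (h1 : ∀ s t : ℝ, dist (σ₁ s) (σ₁ t) = |s - t|)
    (h2 : ∀ s t : ℝ, dist (σ₂ s) (σ₂ t) = |s - t|) :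
    ∃ b₁ b₂ : ℝ,
      AntitoneOn (fun t => dist x (σ₁ t) - t) (Set.Ici 0) ∧
      (∀ t : ℝ, -dist x (σ₁ 0) ≤ dist x (σ₁ t) - t) ∧
      AntitoneOn (fun t => dist x (σ₂ t) - t) (Set.Ici 0) ∧
      (∀ t : ℝ, -dist x (σ₂ 0) ≤ dist x (σ₂ t) - t) ∧
      Tendsto (fun t => dist x (σ₁ t) - t) atTop (nhds b₁) ∧
      Tendsto (fun t => dist x (σ₂ t) - t) atTop (nhds b₂) ∧
      Filter.limsup (fun t => Real.exp (dist (σ₁ t) (σ₂ t) - 2 * t)) atTop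
        = Real.exp (b₁ + b₂) *
          Filter.limsup (fun t => Real.exp (-2 * gromovProd x (σ₁ t) (σ₂ t))) atTop ∧
      Filter.limsup (fun t => Real.exp (dist (σ₁ t) (σ₂ t) - 2 * t)) atTop
        ≤ Real.exp (b₁ + b₂) := by
  have hσ₁ : Isometry σ₁ :=
    Isometry.of_dist_eq fun s t => (h1 s t).trans (Real.dist_eq s t).symm
  have hσ₂ : Isometry σ₂ :=
    Isometry.of_dist_eq fun s t => (h2 s t).trans (Real.dist_eq s t).symm
  obtain ⟨b₁, hb₁⟩ := hσ₁.exists_tendsto_dist_sub x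
  obtain ⟨b₂, hb₂⟩ := hσ₂.exists_tendsto_dist_sub x
  set v : ℝ → ℝ := fun t => Real.exp (-2 * gromovProd x (σ₁ t) (σ₂ t))
  have hsplit : (fun t => Real.exp (dist (σ₁ t) (σ₂ t) - 2 * t))
      = (fun t => Real.exp ((dist x (σ₁ t) - t) + (dist x (σ₂ t) - t))) * v := by
    funext t
    rw [Pi.mul_apply, ← Real.exp_add, dist_eq_add_sub_two_mul_gromovProd x]
    ring_nf
  have hv_le : ∀ t, v t ≤ 1 := fun t => exp_neg_two_mul_gromovProd_le_one x _ _
  have hlimsup := (hb₁.add hb₂).rexp.limsup_mul_of_nonneg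
    (.of_forall fun _ => (Real.exp_pos _).le) (.of_forall fun _ => (Real.exp_pos _).le)
    (isBoundedUnder_of ⟨1, hv_le⟩)
  have hlimsup_v : limsup v atTop ≤ 1 :=
    limsup_le_of_le (isBoundedUnder_of_eventually_ge
      (.of_forall fun _ => (Real.exp_pos _).le)).isCoboundedUnder_le (.of_forall hv_le)
  refine ⟨b₁, b₂, (hσ₁.lipschitz.antitone_dist_sub x).antitoneOn _,
    hσ₁.neg_dist_le_dist_sub x, (hσ₂.lipschitz.antitone_dist_sub x).antitoneOn _,
    hσ₂.neg_dist_le_dist_sub x, hb₁, hb₂, hsplit ▸ hlimsup, ?_⟩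
  rw [hsplit, hlimsup]
  exact mul_le_of_le_one_right (Real.exp_pos _).le hlimsup_v
end

section
/- Let (X, d) be a δ-hyperbolic metric space for some δ ≥ 0. Then there exists a constant C ≥ 1, depending only on δ, such that for all geodesic lines σ₁, σ₂ in X and all s₁, s₂ ∈ ℝ: C⁻¹ e^{s₁ + s₂} d⁺(σ₁, σ₂) ≤ d⁺(φ_{s₁}σ₁, φ_{s₂}σ₂) ≤ C e^{s₁ + s₂} d⁺(σ₁, σ₂), and C⁻¹ e^{−(s₁ + s₂)} d⁻(σ₁, σ₂) ≤ d⁻(φ_{s₁}σ₁, φ_{s₂}σ₂) ≤ C e^{−(s₁ + s₂)} d⁻(σ₁, σ₂). -/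
open Filter Topology

/-- The Hamenstädt-type distance `d⁺` on geodesic lines. -/
noncomputable def dplus {X : Type*} [MetricSpace X] (σ₁ σ₂ : ℝ → X) : ℝ :=
  Filter.limsup (fun t => Real.exp (dist (σ₁ t) (σ₂ t) - 2 * t)) Filter.atTop

/-- The Hamenstädt-type distance `d⁻` on geodesic lines. -/
noncomputable def dminus {X : Type*} [MetricSpace X] (σ₁ σ₂ : ℝ → X) : ℝ :=
  Filter.limsup (fun t => Real.exp (dist (σ₁ (-t)) (σ₂ (-t)) - 2 * t)) Filter.atTop

universe u

/-! Put `f(u, v) = d(σ₁ u, σ₂ v) - u - v`. Then `log` of the function under the `limsup` defining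
`d⁺(φ_{s₁} σ₁, φ_{s₂} σ₂)` is `f(t + s₁, t + s₂) + s₁ + s₂`, while for `d⁺(σ₁, σ₂)` it is `f(t, t)`.
Two applications of the four-point condition based at `σ₁ 0` show that `f` grows by at most `4δ`
when both arguments increase, up to an error `3 d(σ₁ 0, σ₂ 0) - 2 min(u, v)` that tends to `-∞`.
Comparing `(t + s₁, t + s₂)` with `(t - |s₁| - |s₂|, t - |s₁| - |s₂|)` gives the upper bound with
`C = e^{4δ}`. The lower bound is the upper bound for the shifted lines and `-s₁, -s₂`, and `d⁻` is
`d⁺` of the reversed lines. -/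

def IsGromovHyperbolic (δ : ℝ) (X : Type*) [MetricSpace X] : Prop :=
  ∀ p q r x : X, min (gromovProd x p q) (gromovProd x q r) - δ ≤ gromovProd x p r

section Geometry

variable {X : Type*} [MetricSpace X] {δ : ℝ}

lemma gromovProd_comm (o p q : X) : gromovProd o p q = gromovProd o q p := by
  unfold gromovProd
  rw [dist_comm p q]
  ring

lemma IsGromovHyperbolic.nonneg (hX : IsGromovHyperbolic δ X) (x : X) : 0 ≤ δ := by
  simpa [gromovProd] using hX x x x x

lemma IsGromovHyperbolic.min_min_sub_two_mul_le (hX : IsGromovHyperbolic δ X) (o p q r s : X) :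
    min (min (gromovProd o p q) (gromovProd o q r)) (gromovProd o r s) - 2 * δ ≤
      gromovProd o p s := by
  have hδ := hX.nonneg o
  have hpr := hX p q r o
  have hprs : min (min (gromovProd o p q) (gromovProd o q r)) (gromovProd o r s) - δ ≤
      min (gromovProd o p r) (gromovProd o r s) :=
    le_min (by linarith [min_le_left (min (gromovProd o p q) (gromovProd o q r)) (gromovProd o r s)])
      (by linarith [min_le_right (min (gromovProd o p q) (gromovProd o q r)) (gromovProd o r s)])
  linarith [hX p r s o]

lemma Isometry.comp_add_right {σ : ℝ → X} (hσ : Isometry σ) (a : ℝ) :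
    Isometry (fun t => σ (t + a)) :=
  Isometry.of_dist_eq fun s t => by simp [hσ.dist_eq, Real.dist_eq]

lemma Isometry.comp_neg {σ : ℝ → X} (hσ : Isometry σ) : Isometry (fun t => σ (-t)) :=
  Isometry.of_dist_eq fun s t => by rw [hσ.dist_eq, dist_neg_neg]

lemma Isometry.dist_apply_of_le {σ : ℝ → X} (hσ : Isometry σ) {a b : ℝ} (hab : a ≤ b) :
    dist (σ a) (σ b) = b - a := by
  rw [hσ.dist_eq, Real.dist_eq, abs_sub_comm, abs_of_nonneg (sub_nonneg.2 hab)]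

lemma Isometry.sub_dist_le_gromovProd {σ : ℝ → X} (hσ : Isometry σ) (o : X) {a b : ℝ}
    (ha : 0 ≤ a) (hab : a ≤ b) : a - dist o (σ 0) ≤ gromovProd o (σ b) (σ a) := by
  have hoa := dist_triangle (σ 0) o (σ a)
  have hob := dist_triangle (σ 0) o (σ b)
  rw [hσ.dist_apply_of_le ha, dist_comm] at hoa
  rw [hσ.dist_apply_of_le (ha.trans hab), dist_comm] at hob
  unfold gromovProd
  rw [dist_comm (σ b), hσ.dist_apply_of_le hab]
  linarith

lemma dist_apply_sub_two_mul_le {σ₁ σ₂ : ℝ → X} (h₁ : Isometry σ₁) (h₂ : Isometry σ₂) {t : ℝ}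
    (ht : 0 ≤ t) : dist (σ₁ t) (σ₂ t) - 2 * t ≤ dist (σ₁ 0) (σ₂ 0) := by
  have := dist_triangle4 (σ₁ t) (σ₁ 0) (σ₂ 0) (σ₂ t)
  rw [dist_comm (σ₁ t) (σ₁ 0), h₁.dist_apply_of_le ht, h₂.dist_apply_of_le ht] at this
  linarith

lemma IsGromovHyperbolic.dist_sub_sub_le {σ₁ σ₂ : ℝ → X} (hX : IsGromovHyperbolic δ X)
    (h₁ : Isometry σ₁) (h₂ : Isometry σ₂) {u v u' v' : ℝ} (hu : 0 ≤ u) (hv : 0 ≤ v)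
    (huu' : u ≤ u') (hvv' : v ≤ v') :
    dist (σ₁ u') (σ₂ v') - u' - v' ≤
      max (dist (σ₁ u) (σ₂ v) - u - v) (3 * dist (σ₁ 0) (σ₂ 0) - 2 * min u v) + 4 * δ := by
  set o := σ₁ 0
  set c := dist o (σ₂ 0)
  set P := gromovProd o (σ₁ u') (σ₂ v')
  set g := gromovProd o (σ₁ u) (σ₂ v)
  have hchain : min (min u g) (v - c) - 2 * δ ≤ P := by
    refine le_trans ?_ (hX.min_min_sub_two_mul_le o (σ₁ u') (σ₁ u) (σ₂ v) (σ₂ v'))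
    have hx : u ≤ gromovProd o (σ₁ u') (σ₁ u) := by
      simpa [o] using h₁.sub_dist_le_gromovProd o hu huu'
    have hy : v - c ≤ gromovProd o (σ₂ v) (σ₂ v') := by
      rw [gromovProd_comm]
      exact h₂.sub_dist_le_gromovProd o hv hvv'
    gcongr
  have ho_u' : dist o (σ₁ u') = u' := by rw [h₁.dist_apply_of_le (hu.trans huu'), sub_zero]
  have ho_u : dist o (σ₁ u) = u := by rw [h₁.dist_apply_of_le hu, sub_zero]
  have ho_v' := dist_triangle o (σ₂ 0) (σ₂ v')
  have ho_vv' := dist_triangle o (σ₂ v) (σ₂ v')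
  have ho_v := dist_triangle o (σ₂ 0) (σ₂ v)
  rw [h₂.dist_apply_of_le (hv.trans hvv')] at ho_v'
  rw [h₂.dist_apply_of_le hvv'] at ho_vv'
  rw [h₂.dist_apply_of_le hv] at ho_v
  have hP : dist (σ₁ u') (σ₂ v') - u' - v' ≤ c - 2 * P := by
    simp only [P, gromovProd]
    linarith
  have hPg : dist (σ₁ u') (σ₂ v') - u' - v' ≤ dist (σ₁ u) (σ₂ v) - u - v + 2 * g - 2 * P := by
    simp only [P, g, gromovProd]
    linarith
  have hc : 0 ≤ c := dist_nonneg
  have hmin_u := min_le_left u v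
  have hmin_v := min_le_right u v
  have hmax_f := le_max_left (dist (σ₁ u) (σ₂ v) - u - v) (3 * c - 2 * min u v)
  have hmax_c := le_max_right (dist (σ₁ u) (σ₂ v) - u - v) (3 * c - 2 * min u v)
  rcases min_le_iff.1 (sub_le_iff_le_add.1 hchain) with h | hv_le
  · rcases min_le_iff.1 h with hu_le | hg_le <;> linarith
  · linarith

end Geometry

lemma limsup_le_mul_limsup_of_le_mul_max {ι : Type*} {l : Filter ι} [l.NeBot] {f g h : ι → ℝ}
    {K : ℝ} (hK : 0 ≤ K) (hf : ∀ i, 0 ≤ f i) (hg : ∀ i, 0 ≤ g i)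
    (hg_bdd : IsBoundedUnder (· ≤ ·) l g) (hh : Tendsto h l (𝓝 0))
    (hfgh : ∀ᶠ i in l, f i ≤ K * max (g i) (h i)) :
    limsup f l ≤ K * limsup g l := by
  have hmax_bdd : IsBoundedUnder (· ≤ ·) l fun i => max (g i) (h i) :=
    hg_bdd.sup hh.isBoundedUnder_le
  have hmax_cobdd : IsCoboundedUnder (· ≤ ·) l fun i => max (g i) (h i) :=
    isCoboundedUnder_le_of_le l fun i => (hg i).trans (le_max_left _ _)
  calc limsup f l ≤ limsup (fun i => K * max (g i) (h i)) l :=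
        limsup_le_limsup hfgh (isCoboundedUnder_le_of_le l hf)
          ((monotone_mul_left_of_nonneg hK).isBoundedUnder_le_comp hmax_bdd)
    _ = K * max (limsup g l) (limsup h l) := by
        rw [← limsup_max (isCoboundedUnder_le_of_le l hg) hh.isCoboundedUnder_le hg_bdd
          hh.isBoundedUnder_le]
        exact ((monotone_mul_left_of_nonneg hK).map_limsup_of_continuousAt _
          (continuous_const_mul K).continuousAt hmax_bdd hmax_cobdd).symm
    _ = K * limsup g l := by
        rw [hh.limsup_eq, max_eq_left (le_limsup_of_frequently_le
          (Frequently.of_forall hg) hg_bdd)]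

section Flow

variable {X : Type*} [MetricSpace X] {δ : ℝ} {σ₁ σ₂ : ℝ → X}

lemma isBoundedUnder_exp_dist_sub (h₁ : Isometry σ₁) (h₂ : Isometry σ₂) :
    IsBoundedUnder (· ≤ ·) atTop fun t => Real.exp (dist (σ₁ t) (σ₂ t) - 2 * t) :=
  isBoundedUnder_of_eventually_le <| (eventually_ge_atTop 0).mono fun _ ht =>
    Real.exp_le_exp.2 (dist_apply_sub_two_mul_le h₁ h₂ ht)

lemma IsGromovHyperbolic.dplus_comp_add_le (hX : IsGromovHyperbolic δ X) (h₁ : Isometry σ₁)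
    (h₂ : Isometry σ₂) (s₁ s₂ : ℝ) :
    dplus (fun t => σ₁ (t + s₁)) (fun t => σ₂ (t + s₂)) ≤
      Real.exp (4 * δ) * Real.exp (s₁ + s₂) * dplus σ₁ σ₂ := by
  set c := dist (σ₁ 0) (σ₂ 0)
  set M := |s₁| + |s₂|
  set G := fun t => Real.exp (dist (σ₁ t) (σ₂ t) - 2 * t)
  have hG : limsup (fun t => G (t - M)) atTop = dplus σ₁ σ₂ := by
    rw [show (fun t => G (t - M)) = G ∘ (· - M) from rfl, limsup_comp, map_sub_atTop_eq]
    rfl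
  have hG_bdd : IsBoundedUnder (· ≤ ·) atTop fun t => G (t - M) := by
    change (map (G ∘ (· - M)) atTop).IsBounded _
    rw [← map_map, map_sub_atTop_eq]
    exact isBoundedUnder_exp_dist_sub h₁ h₂
  have hdecay : Tendsto (fun t => Real.exp (3 * c - 2 * (t - M))) atTop (𝓝 0) := by
    refine Real.tendsto_exp_atBot.comp (tendsto_atBot.2 fun b => ?_)
    filter_upwards [eventually_ge_atTop ((3 * c + 2 * M - b) / 2)] with t ht
    linarith
  rw [← hG, ← Real.exp_add]
  refine limsup_le_mul_limsup_of_le_mul_max (Real.exp_pos _).le (fun _ => (Real.exp_pos _).le)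
    (fun _ => (Real.exp_pos _).le) hG_bdd hdecay ?_
  filter_upwards [eventually_ge_atTop M] with t ht
  have hM₁ := neg_abs_le s₁
  have hM₂ := neg_abs_le s₂
  have key := hX.dist_sub_sub_le h₁ h₂ (u := t - M) (v := t - M) (u' := t + s₁) (v' := t + s₂)
    (by linarith) (by linarith) (by linarith [abs_nonneg s₂]) (by linarith [abs_nonneg s₁])
  rw [min_self, show dist (σ₁ (t - M)) (σ₂ (t - M)) - (t - M) - (t - M) =
    dist (σ₁ (t - M)) (σ₂ (t - M)) - 2 * (t - M) by ring] at key
  rw [← Real.exp_monotone.map_max, ← Real.exp_add]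
  exact Real.exp_le_exp.2 (by linarith)

lemma IsGromovHyperbolic.le_dplus_comp_add (hX : IsGromovHyperbolic δ X) (h₁ : Isometry σ₁)
    (h₂ : Isometry σ₂) (s₁ s₂ : ℝ) :
    Real.exp (-(4 * δ)) * Real.exp (s₁ + s₂) * dplus σ₁ σ₂ ≤
      dplus (fun t => σ₁ (t + s₁)) (fun t => σ₂ (t + s₂)) := by
  have h := hX.dplus_comp_add_le (h₁.comp_add_right s₁) (h₂.comp_add_right s₂) (-s₁) (-s₂)
  simp only [neg_add_cancel_right] at h
  calc Real.exp (-(4 * δ)) * Real.exp (s₁ + s₂) * dplus σ₁ σ₂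
      ≤ Real.exp (-(4 * δ)) * Real.exp (s₁ + s₂) *
          (Real.exp (4 * δ) * Real.exp (-s₁ + -s₂) *
            dplus (fun t => σ₁ (t + s₁)) (fun t => σ₂ (t + s₂))) := by gcongr
    _ = dplus (fun t => σ₁ (t + s₁)) (fun t => σ₂ (t + s₂)) := by
      rw [← neg_add, Real.exp_neg, Real.exp_neg]
      field_simp

lemma dminus_eq_dplus_comp_neg (σ₁ σ₂ : ℝ → X) :
    dminus σ₁ σ₂ = dplus (fun t => σ₁ (-t)) (fun t => σ₂ (-t)) := rfl

lemma dminus_comp_add_eq_dplus (σ₁ σ₂ : ℝ → X) (s₁ s₂ : ℝ) :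
    dminus (fun t => σ₁ (t + s₁)) (fun t => σ₂ (t + s₂)) =
      dplus (fun t => σ₁ (-(t + -s₁))) (fun t => σ₂ (-(t + -s₂))) := by
  simp only [dminus_eq_dplus_comp_neg, neg_add, neg_neg]

end Flow

/-- In a `δ`-hyperbolic space, the geodesic flow exponentially expands `d⁺` and
exponentially contracts `d⁻`, with a constant `C ≥ 1` depending only on `δ`. -/
theorem stmt_5 (δ : ℝ) (hδ : 0 ≤ δ) :
    ∃ C : ℝ, 1 ≤ C ∧
      ∀ (X : Type u) [MetricSpace X],
        (∀ p q r x : X,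
          min (gromovProd x p q) (gromovProd x q r) - δ ≤ gromovProd x p r) →
        ∀ σ₁ σ₂ : ℝ → X,
          (∀ s t : ℝ, dist (σ₁ s) (σ₁ t) = |s - t|) →
          (∀ s t : ℝ, dist (σ₂ s) (σ₂ t) = |s - t|) →
          ∀ s₁ s₂ : ℝ,
            (C⁻¹ * Real.exp (s₁ + s₂) * dplus σ₁ σ₂ ≤
                dplus (fun t => σ₁ (t + s₁)) (fun t => σ₂ (t + s₂)) ∧
              dplus (fun t => σ₁ (t + s₁)) (fun t => σ₂ (t + s₂)) ≤
                C * Real.exp (s₁ + s₂) * dplus σ₁ σ₂) ∧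
            (C⁻¹ * Real.exp (-(s₁ + s₂)) * dminus σ₁ σ₂ ≤
                dminus (fun t => σ₁ (t + s₁)) (fun t => σ₂ (t + s₂)) ∧
              dminus (fun t => σ₁ (t + s₁)) (fun t => σ₂ (t + s₂)) ≤
                C * Real.exp (-(s₁ + s₂)) * dminus σ₁ σ₂) := by
  refine ⟨Real.exp (4 * δ), Real.one_le_exp (by linarith), ?_⟩
  intro X _ hyp σ₁ σ₂ h₁ h₂ s₁ s₂
  have hX : IsGromovHyperbolic δ X := hyp
  have hσ₁ : Isometry σ₁ := .of_dist_eq fun s t => by rw [h₁, Real.dist_eq]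
  have hσ₂ : Isometry σ₂ := .of_dist_eq fun s t => by rw [h₂, Real.dist_eq]
  rw [← Real.exp_neg]
  refine ⟨⟨hX.le_dplus_comp_add hσ₁ hσ₂ s₁ s₂, hX.dplus_comp_add_le hσ₁ hσ₂ s₁ s₂⟩, ?_⟩
  rw [dminus_comp_add_eq_dplus, dminus_eq_dplus_comp_neg, neg_add]
  exact ⟨hX.le_dplus_comp_add hσ₁.comp_neg hσ₂.comp_neg _ _,
    hX.dplus_comp_add_le hσ₁.comp_neg hσ₂.comp_neg _ _⟩
end

section
/- Let (X, m) be a probability space and T : X → X a measurable map preserving m. Let G : X → ℝ be a measurable function and c ≥ 0 a constant such that G ∘ T − G ≥ −c m-almost everywhere. Then G ∘ T − G is m-integrable and ∫_X (G ∘ T − G) dm = 0. -/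
/-!
Truncate `G` at level `n`: `Gₙ = max (-n) (min n G)` is bounded, so `Dₙ = Gₙ ∘ T - Gₙ` is
integrable with mean zero by invariance of `m`. Truncation is monotone and `1`-Lipschitz, hence
`Dₙ ≥ -c` and `|Dₙ| ≤ |G ∘ T - G|`, and `Dₙ → G ∘ T - G` pointwise. Fatou's lemma applied to
`Dₙ + c ≥ 0` shows that `G ∘ T - G` is integrable, after which dominated convergence gives
`∫ (G ∘ T - G) dm = lim ∫ Dₙ dm = 0`.
-/

open MeasureTheory Filter Topology

noncomputable def truncAt (M t : ℝ) : ℝ := max (-M) (min M t)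

lemma truncAt_monotone (M : ℝ) : Monotone (truncAt M) :=
  fun _ _ hab => max_le_max le_rfl (min_le_min le_rfl hab)

lemma lipschitzWith_truncAt (M : ℝ) : LipschitzWith 1 (truncAt M) :=
  (LipschitzWith.id.const_min M).const_max (-M)

lemma measurable_truncAt (M : ℝ) : Measurable (truncAt M) :=
  (lipschitzWith_truncAt M).continuous.measurable

lemma abs_truncAt_le {M : ℝ} (hM : 0 ≤ M) (t : ℝ) : |truncAt M t| ≤ M :=
  abs_le.2 ⟨le_max_left _ _, max_le (by linarith) (min_le_left _ _)⟩

lemma abs_truncAt_sub_truncAt_le (M a b : ℝ) : |truncAt M a - truncAt M b| ≤ |a - b| := by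
  simpa [Real.dist_eq] using (lipschitzWith_truncAt M).dist_le_mul a b

lemma truncAt_of_abs_le {M t : ℝ} (h : |t| ≤ M) : truncAt M t = t := by
  rw [truncAt, min_eq_right (abs_le.1 h).2, max_eq_right (abs_le.1 h).1]

lemma tendsto_truncAt (t : ℝ) : Tendsto (fun n : ℕ => truncAt n t) atTop (𝓝 t) := by
  refine tendsto_const_nhds.congr' ?_
  filter_upwards [eventually_ge_atTop ⌈|t|⌉₊] with n hn
  exact (truncAt_of_abs_le ((Nat.le_ceil _).trans (Nat.cast_le.2 hn))).symm

lemma neg_le_sub_of_monotone_of_lipschitzWith {f : ℝ → ℝ} (hmono : Monotone f)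
    (hlip : LipschitzWith 1 f) {a b c : ℝ} (hc : 0 ≤ c) (h : -c ≤ a - b) :
    -c ≤ f a - f b := by
  rcases le_total b a with hba | hab
  · linarith [hmono hba]
  · have := hlip.dist_le_mul b a
    rw [Real.dist_eq, Real.dist_eq, NNReal.coe_one, one_mul, abs_of_nonneg (sub_nonneg.2 hab)]
      at this
    linarith [le_abs_self (f b - f a)]

section

variable {X : Type*} [MeasurableSpace X] {μ : Measure X}

lemma MeasureTheory.MeasurePreserving.integral_comp_sub_eq_zero {E : Type*}
    [NormedAddCommGroup E] [NormedSpace ℝ E]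
    {T : X → X} (hT : MeasurePreserving T μ μ) {g : X → E} (hg : Integrable g μ) :
    ∫ x, (g (T x) - g x) ∂μ = 0 := by
  rw [integral_sub (f := fun x => g (T x)) (hT.integrable_comp_of_integrable hg) hg,
    ← integral_map hT.measurable.aemeasurable (by rw [hT.map_eq]; exact hg.1),
    hT.map_eq, sub_self]

lemma integrable_of_tendsto_of_integral_le {f : ℕ → X → ℝ} {g : X → ℝ} {C : ℝ}
    (hf : ∀ n, Integrable (f n) μ) (hf_nonneg : ∀ n, 0 ≤ᵐ[μ] f n)
    (hlim : ∀ᵐ x ∂μ, Tendsto (fun n => f n x) atTop (𝓝 (g x)))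
    (hC : ∀ n, ∫ x, f n x ∂μ ≤ C) : Integrable g μ := by
  have hg_nonneg : 0 ≤ᵐ[μ] g := by
    filter_upwards [hlim, ae_all_iff.2 hf_nonneg] with x hx hx0
    exact ge_of_tendsto' hx hx0
  refine ⟨aestronglyMeasurable_of_tendsto_ae _ (fun n => (hf n).1) hlim,
    (hasFiniteIntegral_iff_ofReal hg_nonneg).2 ?_⟩
  calc ∫⁻ x, ENNReal.ofReal (g x) ∂μ
      = ∫⁻ x, liminf (fun n => ENNReal.ofReal (f n x)) atTop ∂μ := by
        refine lintegral_congr_ae ?_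
        filter_upwards [hlim] with x hx
        exact ((ENNReal.continuous_ofReal.tendsto _).comp hx).liminf_eq.symm
    _ ≤ liminf (fun n => ∫⁻ x, ENNReal.ofReal (f n x) ∂μ) atTop :=
        lintegral_liminf_le' fun n => (hf n).1.aemeasurable.ennreal_ofReal
    _ ≤ ENNReal.ofReal C := by
        refine liminf_le_of_frequently_le' (Frequently.of_forall fun n => ?_)
        rw [← ofReal_integral_eq_lintegral_ofReal (hf n) (hf_nonneg n)]
        exact ENNReal.ofReal_le_ofReal (hC n)
    _ < ⊤ := ENNReal.ofReal_lt_top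

end

/-- If `T` preserves the probability measure `m` and `G ∘ T - G ≥ -c` a.e. for a
measurable `G` and a constant `c ≥ 0`, then `G ∘ T - G` is integrable with zero mean. -/
theorem stmt_7 {X : Type*} [MeasurableSpace X] (m : Measure X) [IsProbabilityMeasure m]
    (T : X → X) (hT : MeasurePreserving T m m)
    (G : X → ℝ) (hG : Measurable G) (c : ℝ) (hc : 0 ≤ c)
    (h : ∀ᵐ x ∂m, -c ≤ G (T x) - G x) :
    Integrable (fun x => G (T x) - G x) m ∧ ∫ x, (G (T x) - G x) ∂m = 0 := by
  set F : X → ℝ := fun x => G (T x) - G x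
  set D : ℕ → X → ℝ := fun n x => truncAt n (G (T x)) - truncAt n (G x)
  have hG_trunc_int (n : ℕ) : Integrable (fun x => truncAt n (G x)) m :=
    .of_bound ((measurable_truncAt n).comp hG).aestronglyMeasurable n
      (ae_of_all _ fun x => abs_truncAt_le n.cast_nonneg _)
  have hD_int (n : ℕ) : Integrable (D n) m :=
    (hT.integrable_comp_of_integrable (hG_trunc_int n)).sub (hG_trunc_int n)
  have hD_zero (n : ℕ) : ∫ x, D n x ∂m = 0 := hT.integral_comp_sub_eq_zero (hG_trunc_int n)
  have hD_lim (x : X) : Tendsto (D · x) atTop (𝓝 (F x)) :=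
    (tendsto_truncAt _).sub (tendsto_truncAt _)
  have hD_ge (n : ℕ) : ∀ᵐ x ∂m, -c ≤ D n x := h.mono fun x =>
    neg_le_sub_of_monotone_of_lipschitzWith (truncAt_monotone n) (lipschitzWith_truncAt n) hc
  have hF_int : Integrable F m := by
    refine integrable_add_const_iff.mp (integrable_of_tendsto_of_integral_le
      (f := fun n x => D n x + c) (C := c) (fun n => (hD_int n).add (integrable_const c))
      (fun n => (hD_ge n).mono fun x => neg_le_iff_add_nonneg.mp)
      (ae_of_all _ fun x => (hD_lim x).add_const c) (fun n => ?_))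
    simp [integral_add (hD_int n) (integrable_const c), hD_zero]
  have hD_tendsto : Tendsto (fun n => ∫ x, D n x ∂m) atTop (𝓝 (∫ x, F x ∂m)) :=
    tendsto_integral_of_dominated_convergence (fun x => |F x|) (fun n => (hD_int n).1)
      hF_int.abs (fun n => ae_of_all _ fun x => abs_truncAt_sub_truncAt_le n _ _)
      (ae_of_all _ hD_lim)
  simp only [hD_zero] at hD_tendsto
  exact ⟨hF_int, tendsto_nhds_unique tendsto_const_nhds hD_tendsto |>.symm⟩
end

section
/- Let μ be a finite Borel measure on ℝ, let ρ > 0, and let ε₀ ∈ (0, 1). Then for Lebesgue-almost every r ∈ (0, ρ), the series Σ_{k=0}^∞ μ([r − ε₀^k, r + ε₀^k]) converges. -/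
/-!
Integrating `r ↦ μ([r - a, r + a])` against Lebesgue measure and swapping the order of
integration (Tonelli) gives `2a · μ(ℝ)`. With `a = ε₀ᵏ` the integrals of the terms of the series
sum to `2 μ(ℝ) / (1 - ε₀) < ∞`, so the series itself is finite almost everywhere.
-/

open MeasureTheory Metric
open scoped ENNReal

section ClosedBall

variable {E : Type*} [PseudoMetricSpace E] [MeasurableSpace E] [OpensMeasurableSpace E]
  [SecondCountableTopology E]

theorem measurableSet_dist_le (a : ℝ) : MeasurableSet {p : E × E | dist p.1 p.2 ≤ a} :=
  measurableSet_le measurable_dist measurable_const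

theorem measurable_measure_closedBall (μ : Measure E) [SFinite μ] (a : ℝ) :
    Measurable fun x => μ (closedBall x a) := by
  simpa [closedBall, dist_comm] using
    measurable_measure_prodMk_left (ν := μ) (measurableSet_dist_le a)

theorem lintegral_measure_closedBall_comm (μ ν : Measure E) [SFinite μ] [SFinite ν] (a : ℝ) :
    ∫⁻ x, μ (closedBall x a) ∂ν = ∫⁻ y, ν (closedBall y a) ∂μ := by
  have hs := measurableSet_dist_le (E := E) a
  calc ∫⁻ x, μ (closedBall x a) ∂ν = (ν.prod μ) {p | dist p.1 p.2 ≤ a} := by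
        rw [Measure.prod_apply hs]; simp [closedBall, dist_comm]
    _ = ∫⁻ y, ν (closedBall y a) ∂μ := by
        rw [Measure.prod_apply_symm hs]; rfl

end ClosedBall

theorem Real.lintegral_measure_closedBall (μ : Measure ℝ) [SFinite μ] (a : ℝ) :
    ∫⁻ x, μ (closedBall x a) = ENNReal.ofReal (2 * a) * μ Set.univ := by
  simp [lintegral_measure_closedBall_comm μ volume, Real.volume_closedBall]

theorem Real.ae_tsum_measure_closedBall_lt_top (μ : Measure ℝ) [IsFiniteMeasure μ] {a : ℕ → ℝ}
    (ha₀ : ∀ k, 0 ≤ a k) (ha : Summable a) :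
    ∀ᵐ x, ∑' k, μ (closedBall x (a k)) < ∞ := by
  refine ae_lt_top (.tsum fun k => measurable_measure_closedBall μ (a k)) ?_
  have hsum : ∑' k, ENNReal.ofReal (2 * a k) ≠ ∞ := by
    rw [← ENNReal.ofReal_tsum_of_nonneg (fun k => by linarith [ha₀ k]) (ha.mul_left 2)]
    exact ENNReal.ofReal_ne_top
  rw [lintegral_tsum fun k => (measurable_measure_closedBall μ (a k)).aemeasurable]
  simp only [Real.lintegral_measure_closedBall, ENNReal.tsum_mul_right]
  exact ENNReal.mul_ne_top hsum (measure_ne_top μ _)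

theorem stmt_9_general (μ : Measure ℝ) [IsFiniteMeasure μ] (ρ : ℝ)
    (ε₀ : ℝ) (hε : ε₀ ∈ Set.Ioo (0 : ℝ) 1) :
    ∀ᵐ r ∂(volume.restrict (Set.Ioo 0 ρ)),
      ∑' k : ℕ, μ (Set.Icc (r - ε₀ ^ k) (r + ε₀ ^ k)) < ⊤ := by
  obtain ⟨hε₀, hε₁⟩ := hε
  refine ae_restrict_of_ae ?_
  simpa only [Real.closedBall_eq_Icc] using Real.ae_tsum_measure_closedBall_lt_top μ
    (fun k => pow_nonneg hε₀.le k) (summable_geometric_of_lt_one hε₀.le hε₁)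

/-- For a finite Borel measure `μ` on `ℝ`, `ρ > 0` and `ε₀ ∈ (0,1)`, for Lebesgue-a.e.
`r ∈ (0, ρ)` the series `Σ_k μ([r - ε₀^k, r + ε₀^k])` converges. -/
theorem stmt_9 (μ : Measure ℝ) [IsFiniteMeasure μ] (ρ : ℝ) (hρ : 0 < ρ)
    (ε₀ : ℝ) (hε : ε₀ ∈ Set.Ioo (0 : ℝ) 1) :
    ∀ᵐ r ∂(volume.restrict (Set.Ioo 0 ρ)),
      ∑' k : ℕ, μ (Set.Icc (r - ε₀ ^ k) (r + ε₀ ^ k)) < ⊤ :=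
  stmt_9_general μ ρ ε₀ hε
end
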